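/- arXiv:2302.01685 — 13 statements merged into one kernel-verified Lean document; each statement's English description precedes it below -/
import Mathlib

section
/- Let p and q be odd prime numbers with p = 2q + 1, and let A = (p^q - 1)/(p - 1). Then q divides A, every prime divisor of A other than q is greater than p, and A has at least two distinct prime divisors (so exactly one prime divisor of A is less than p, namely q). -/
/-!
Since `p ≡ 1 (mod 2q)`, `A ≡ q (mod 2q)`: so `q ∣ A` and `A` is odd, while `A ≡ 1 (mod p)`.
As `q` is prime, `A = Φ_q(p)`, so for a prime `r ≠ q` dividing `A` the residue of `p` has order `q`
in `(ℤ/r)ˣ`, whence `q ∣ r - 1`; with `r` odd this gives `2q ∣ r - 1`, so `r ≥ p`, and `r ≠ p`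
as `p ∤ A`. Finally `p = 1 + 2q` makes `A ≡ q (mod q²)`, so `q` divides `A > q` exactly once and
`A` has a second prime factor.
-/

open Finset Polynomial

namespace Nat

theorem geom_sum_modEq_of_modEq_one {a n : ℕ} (ha : a ≡ 1 [MOD n]) (k : ℕ) :
    ∑ i ∈ range k, a ^ i ≡ k [MOD n] := by
  simpa using ModEq.sum fun i (_ : i ∈ range k) => ha.pow i

theorem geom_sum_modEq_one {k : ℕ} (hk : k ≠ 0) (a : ℕ) : ∑ i ∈ range k, a ^ i ≡ 1 [MOD a] := by
  obtain ⟨k, rfl⟩ := exists_eq_succ_of_ne_zero hk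
  rw [sum_range_succ', pow_zero]
  have : a ∣ ∑ i ∈ range k, a ^ (i + 1) := dvd_sum fun i _ => dvd_pow_self a i.succ_ne_zero
  simpa using (modEq_zero_iff_dvd.mpr this).add_right 1

theorem modEq_one_of_prime_dvd_geom_sum {q r a : ℕ} (hq : q.Prime) (hr : r.Prime) (hrq : r ≠ q)
    (h : r ∣ ∑ i ∈ range q, a ^ i) : r ≡ 1 [MOD q] := by
  have := Fact.mk hq
  have := Fact.mk hr
  have : NeZero (q : ZMod r) :=
    NeZero.of_not_dvd (ZMod r) fun hdvd => hrq ((prime_dvd_prime_iff_eq hr hq).mp hdvd)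
  have hroot : (cyclotomic q (ZMod r)).IsRoot a := by
    have : ((∑ i ∈ range q, a ^ i : ℕ) : ZMod r) = 0 := (ZMod.natCast_eq_zero_iff _ r).mpr h
    simpa [cyclotomic_prime, eval_finsetSum] using this
  have hord : orderOf (a : ZMod r) = q := (isRoot_cyclotomic_iff.mp hroot).eq_orderOf.symm
  have hdvd : q ∣ r - 1 :=
    hord ▸ ZMod.orderOf_dvd_card_sub_one ((isRoot_cyclotomic_iff.mp hroot).ne_zero hq.ne_zero)
  exact ((modEq_iff_dvd' hr.one_le).mpr hdvd).symm

theorem not_sq_dvd_geom_sum_one_add_mul {q : ℕ} (hq : Odd q) (hq1 : 1 < q) (b : ℕ) :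
    ¬ q ^ 2 ∣ ∑ i ∈ range q, (1 + q * b) ^ i := by
  intro hdvd
  have hsub : (q : ℤ) ^ 2 ∣ (∑ i ∈ range q, (1 + q * b : ℤ) ^ i) - q := by
    simpa using odd_sq_dvd_geom_sum₂_sub (1 : ℤ) (b : ℤ) hq
  have hself : (q : ℤ) ^ 2 ∣ q := by
    have : (q : ℤ) ^ 2 ∣ ∑ i ∈ range q, (1 + q * b : ℤ) ^ i := by exact_mod_cast hdvd
    simpa using this.sub hsub
  have := le_of_dvd (by omega) (show q ^ 2 ∣ q by exact_mod_cast hself)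
  nlinarith

theorem exists_prime_ne_dvd_of_not_sq_dvd {n q : ℕ} (hqn : q ∣ n) (hsq : ¬ q ^ 2 ∣ n)
    (hn : n ≠ q) : ∃ s, s.Prime ∧ s ≠ q ∧ s ∣ n := by
  obtain ⟨m, rfl⟩ := hqn
  have hm : m ≠ 1 := by rintro rfl; exact hn (mul_one q)
  refine ⟨m.minFac, minFac_prime hm, fun hs => hsq ?_, dvd_mul_of_dvd_right (minFac_dvd m) q⟩
  rw [sq]
  exact mul_dvd_mul_left q (hs ▸ minFac_dvd m)

end Nat

theorem stmt_0_general (p q : ℕ) (hq : q.Prime) (hqo : Odd q)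
    (hpq : p = 2 * q + 1) (A : ℕ) (hA : A = ∑ i ∈ Finset.range q, p ^ i) :
    q ∣ A ∧ (∀ r : ℕ, r.Prime → r ∣ A → r ≠ q → p < r) ∧
      ∃ r s : ℕ, r.Prime ∧ s.Prime ∧ r ≠ s ∧ r ∣ A ∧ s ∣ A := by
  have hq2 := hq.two_le
  have hp1 : p ≡ 1 [MOD 2 * q] := ((Nat.modEq_iff_dvd' (by omega)).mpr ⟨1, by omega⟩).symm
  have hA2q : A ≡ q [MOD 2 * q] := hA ▸ Nat.geom_sum_modEq_of_modEq_one hp1 q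
  have hqA : q ∣ A := Nat.modEq_zero_iff_dvd.mp ((hA2q.of_mul_left 2).trans (by simp [Nat.ModEq]))
  have hAodd : Odd A := by
    have : A % 2 = q % 2 := hA2q.of_mul_right q
    rw [Nat.odd_iff] at hqo ⊢
    omega
  have hAp : A % p = 1 := by
    have : A ≡ 1 [MOD p] := hA ▸ Nat.geom_sum_modEq_one hq.ne_zero p
    rwa [Nat.ModEq, Nat.mod_eq_of_lt (show 1 < p by omega)] at this
  have hpA : ¬ p ∣ A := by rw [Nat.dvd_iff_mod_eq_zero]; omega
  have hAq : A ≠ q := by rintro rfl; rw [Nat.mod_eq_of_lt (by omega)] at hAp; omega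
  refine ⟨hqA, fun r hr hrA hrq => ?_, ?_⟩
  · have hr1 : r ≡ 1 [MOD 2 * q] := (Nat.modEq_and_modEq_iff_modEq_mul hqo.coprime_two_left).mp
      ⟨Nat.odd_iff.mp (hAodd.of_dvd_nat hrA),
        Nat.modEq_one_of_prime_dvd_geom_sum hq hr hrq (hA ▸ hrA)⟩
    have := Nat.le_of_dvd (by have := hr.two_le; omega) ((Nat.modEq_iff_dvd' hr.one_le).mp hr1.symm)
    have : r ≠ p := by rintro rfl; exact hpA hrA
    omega
  · have hsq : ¬ q ^ 2 ∣ A := by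
      have := Nat.not_sq_dvd_geom_sum_one_add_mul hqo hq.one_lt 2
      rwa [hA, hpq, show 2 * q + 1 = 1 + q * 2 by ring]
    obtain ⟨s, hs, hsne, hsA⟩ := Nat.exists_prime_ne_dvd_of_not_sq_dvd hqA hsq hAq
    exact ⟨q, s, hq, hs, hsne.symm, hqA, hsA⟩

/-- Theorem 1: if `p` and `q` are odd primes with `p = 2q + 1` and
`A = (p^q - 1)/(p - 1) = 1 + p + ⋯ + p^(q-1)`, then `q` divides `A`,
every prime divisor of `A` other than `q` is greater than `p`, and
`A` has at least two distinct prime divisors. -/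
theorem stmt_0 (p q : ℕ) (hp : p.Prime) (hq : q.Prime) (hpo : Odd p) (hqo : Odd q)
    (hpq : p = 2 * q + 1) (A : ℕ) (hA : A = ∑ i ∈ Finset.range q, p ^ i) :
    q ∣ A ∧ (∀ r : ℕ, r.Prime → r ∣ A → r ≠ q → p < r) ∧
      ∃ r s : ℕ, r.Prime ∧ s.Prime ∧ r ≠ s ∧ r ∣ A ∧ s ∣ A :=
  stmt_0_general p q hq hqo hpq A hA
end

section
/- Let p and q be odd prime numbers with p < 2q + 1, and let A = (p^q - 1)/(p - 1). Then every prime divisor of A is greater than p. -/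
/-!
If a prime `r` divides `A = 1 + p + ⋯ + p^(q-1)`, then `p^q ≡ 1 [MOD r]`, so the order of `p`
modulo `r` is `1` or `q`. Order `q` gives `r ≡ 1 [MOD q]`, hence `r ≡ 1 [MOD 2q]` as `r` is odd,
and `r > 2q ≥ p`. Order `1` gives `A ≡ q [MOD r]`, so `r = q`; then `p ≡ 1 [MOD 2q]`, which
together with `p < 2q + 1` leaves only `p = 1 < r`.
-/

open Finset

theorem orderOf_eq_of_geom_sum_eq_zero {M : Type*} [Ring M] {x : M} {q : ℕ} [Fact q.Prime]
    (hsum : ∑ i ∈ range q, x ^ i = 0) (hx : x ≠ 1) : orderOf x = q := by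
  refine orderOf_eq_prime ?_ hx
  have h := geom_sum_mul x q
  rwa [hsum, zero_mul, eq_comm, sub_eq_zero] at h

theorem ZMod.geom_sum_natCast_eq_zero {p q r : ℕ} (hdvd : r ∣ ∑ i ∈ range q, p ^ i) :
    ∑ i ∈ range q, (p : ZMod r) ^ i = 0 := by
  exact_mod_cast (ZMod.natCast_eq_zero_iff _ r).mpr hdvd

theorem Nat.dvd_of_modEq_one_of_dvd_geom_sum {p q r : ℕ} (hpr : p ≡ 1 [MOD r])
    (hdvd : r ∣ ∑ i ∈ range q, p ^ i) : r ∣ q := by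
  have hsum := ZMod.geom_sum_natCast_eq_zero hdvd
  rw [(ZMod.natCast_eq_natCast_iff p 1 r).mpr hpr] at hsum
  simpa [ZMod.natCast_eq_zero_iff] using hsum

theorem Nat.modEq_one_of_dvd_geom_sum {p q r : ℕ} [Fact q.Prime] [Fact r.Prime]
    (hdvd : r ∣ ∑ i ∈ range q, p ^ i) (hpr : ¬p ≡ 1 [MOD r]) : r ≡ 1 [MOD q] := by
  have hx1 : (p : ZMod r) ≠ 1 := by
    rwa [← Nat.cast_one, Ne, ZMod.natCast_eq_natCast_iff]
  have hord := orderOf_eq_of_geom_sum_eq_zero (ZMod.geom_sum_natCast_eq_zero hdvd) hx1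
  have hx0 : (p : ZMod r) ≠ 0 := by
    rintro h
    rw [h, orderOf_zero] at hord
    exact (Fact.out : q.Prime).ne_zero hord.symm
  have hq_dvd : q ∣ r - 1 := hord ▸ ZMod.orderOf_dvd_card_sub_one hx0
  exact ((Nat.modEq_iff_dvd' (Fact.out : r.Prime).one_le).mpr hq_dvd).symm

theorem Nat.ModEq.two_mul_of_odd {n q : ℕ} (h : n ≡ 1 [MOD q]) (hn : Odd n) (hq : Odd q) :
    n ≡ 1 [MOD 2 * q] :=
  (Nat.modEq_and_modEq_iff_modEq_mul (Nat.coprime_two_left.mpr hq)).mp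
    ⟨Nat.odd_iff.mp hn, h⟩

theorem Nat.ModEq.modulus_lt {n m : ℕ} (h : n ≡ 1 [MOD m]) (hn : 1 < n) : m < n := by
  have hm_le : m ≤ n - 1 := Nat.le_of_dvd (by omega) ((Nat.modEq_iff_dvd' hn.le).mp h.symm)
  omega

theorem stmt_1_general (p q : ℕ) (hq : q.Prime) (hpo : Odd p) (hqo : Odd q)
    (hpq : p < 2 * q + 1) (A : ℕ) (hA : A = ∑ i ∈ Finset.range q, p ^ i) :
    ∀ r : ℕ, r.Prime → r ∣ A → p < r := by
  rintro r hr hrA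
  subst hA
  have := Fact.mk hq
  have := Fact.mk hr
  by_cases hpr : p ≡ 1 [MOD r]
  · obtain rfl : r = q :=
      (hq.eq_one_or_self_of_dvd r (Nat.dvd_of_modEq_one_of_dvd_geom_sum hpr hrA)).resolve_left
        hr.one_lt.ne'
    by_contra! hrp
    have h2q_lt : 2 * r < p := (hpr.two_mul_of_odd hpo hqo).modulus_lt (hr.one_lt.trans_le hrp)
    omega
  · have hr2 : r ≠ 2 := by
      rintro rfl
      exact hpr (Nat.odd_iff.mp hpo)
    have h2q_lt : 2 * q < r := ((Nat.modEq_one_of_dvd_geom_sum hrA hpr).two_mul_of_odd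
      (hr.odd_of_ne_two hr2) hqo).modulus_lt hr.one_lt
    omega

/-- Theorem 2: if `p` and `q` are odd primes with `p < 2q + 1`, then every prime
divisor of `A = (p^q - 1)/(p - 1) = 1 + p + ⋯ + p^(q-1)` is greater than `p`. -/
theorem stmt_1 (p q : ℕ) (hp : p.Prime) (hq : q.Prime) (hpo : Odd p) (hqo : Odd q)
    (hpq : p < 2 * q + 1) (A : ℕ) (hA : A = ∑ i ∈ Finset.range q, p ^ i) :
    ∀ r : ℕ, r.Prime → r ∣ A → p < r :=
  stmt_1_general p q hq hpo hqo hpq A hA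
end

section
/- Let q be an odd prime number and let p be a natural number with 2 ≤ p ≤ 2q and p ≠ q + 1 (that is, p lies in ]1; q] ∪ [q + 2; 2q]). Then every prime divisor of A = (p^q - 1)/(p - 1) is greater than p. -/
/-!
Let `r` be a prime dividing `A = 1 + p + ⋯ + p^(q-1)`. Then `p^q ≡ 1 (mod r)`, so the order of `p`
modulo `r` is `1` or `q`. Order `1` means `p ≡ 1 (mod r)`, hence `A ≡ q (mod r)`, so `r = q` and
`q ∣ p - 1`; with `p ≤ 2q` this forces `p ≤ 1` or `p = q + 1`. Order `q` means `q ∣ r - 1`; since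
`q + 1` is even, `r ≥ 2q + 1 > p`.
-/

open Finset

theorem pow_eq_one_of_geom_sum_eq_zero {R : Type*} [CommRing R] {x : R} {n : ℕ}
    (h : ∑ i ∈ range n, x ^ i = 0) : x ^ n = 1 := by
  have h' := geom_sum_mul x n
  rw [h, zero_mul] at h'
  exact sub_eq_zero.mp h'.symm

theorem Nat.Prime.eq_and_dvd_sub_one_or_dvd_sub_one_of_dvd_geom_sum {p q r : ℕ} (hr : r.Prime)
    (hq : q.Prime) (h : r ∣ ∑ i ∈ range q, p ^ i) : (r = q ∧ q ∣ p - 1) ∨ q ∣ r - 1 := by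
  have := Fact.mk hr
  have hsum : ∑ i ∈ range q, (p : ZMod r) ^ i = 0 := by
    exact_mod_cast (ZMod.natCast_eq_zero_iff _ _).2 h
  have hpow := pow_eq_one_of_geom_sum_eq_zero hsum
  have hp0 : (p : ZMod r) ≠ 0 := by
    rintro h0
    simp [h0, zero_pow hq.ne_zero] at hpow
  rcases hq.eq_one_or_self_of_dvd _ (orderOf_dvd_of_pow_eq_one hpow) with hord | hord
  · have hp1 : (p : ZMod r) = 1 := orderOf_eq_one_iff.mp hord
    have hrq : r = q := by
      rw [hp1] at hsum
      simp only [one_pow, sum_const, card_range, nsmul_eq_mul, mul_one] at hsum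
      exact (Nat.prime_dvd_prime_iff_eq hr hq).mp ((ZMod.natCast_eq_zero_iff _ _).mp hsum)
    subst hrq
    refine Or.inl ⟨rfl, (Nat.modEq_iff_dvd' ?_).mp ?_⟩
    · exact Nat.one_le_iff_ne_zero.mpr (by rintro rfl; simp at hp0)
    · exact ((ZMod.natCast_eq_natCast_iff _ _ _).mp (by simpa using hp1)).symm
  · exact Or.inr (hord ▸ ZMod.orderOf_dvd_card_sub_one hp0)

theorem Nat.Prime.two_mul_lt_of_dvd_sub_one {q r : ℕ} (hr : r.Prime) (hq : 1 < q) (hqo : Odd q)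
    (h : q ∣ r - 1) : 2 * q < r := by
  have hr2 := hr.two_le
  by_contra! hrq
  have hr_eq : r = q + 1 := by
    have := Nat.eq_of_dvd_of_lt_two_mul (by omega) h (by omega)
    omega
  have := hr.even_iff.mp (hr_eq ▸ hqo.add_one)
  omega

theorem stmt_2_general (p q : ℕ) (hq : q.Prime) (hqo : Odd q)
    (hp2q : p ≤ 2 * q) (hpne : p ≠ q + 1)
    (A : ℕ) (hA : A = ∑ i ∈ Finset.range q, p ^ i) :
    ∀ r : ℕ, r.Prime → r ∣ A → p < r := by
  rintro r hr hrA
  subst hA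
  rcases hr.eq_and_dvd_sub_one_or_dvd_sub_one_of_dvd_geom_sum hq hrA with ⟨rfl, hdvd⟩ | hdvd
  · have hr2 := hr.two_le
    by_contra! hrp
    have := Nat.eq_of_dvd_of_lt_two_mul (by omega) hdvd (by omega)
    omega
  · linarith [hr.two_mul_lt_of_dvd_sub_one hq.one_lt hqo hdvd]

/-- Theorem 3: if `q` is an odd prime and `p` is a natural number with
`2 ≤ p ≤ 2q` and `p ≠ q + 1`, then every prime divisor of
`A = (p^q - 1)/(p - 1) = 1 + p + ⋯ + p^(q-1)` is greater than `p`. -/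
theorem stmt_2 (p q : ℕ) (hq : q.Prime) (hqo : Odd q)
    (hp2 : 2 ≤ p) (hp2q : p ≤ 2 * q) (hpne : p ≠ q + 1)
    (A : ℕ) (hA : A = ∑ i ∈ Finset.range q, p ^ i) :
    ∀ r : ℕ, r.Prime → r ∣ A → p < r :=
  stmt_2_general p q hq hqo hp2q hpne A hA
end

section
/- Let q be an odd prime number and let p ∈ {q + 1, 2q + 1}, and let A = (p^q - 1)/(p - 1). Then q divides A, every prime divisor of A other than q is greater than p, and A has at least two distinct prime divisors (so exactly one prime divisor of A is less than p, namely q). -/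
/-!
Since `p ≡ 1 (mod q)`, lifting the exponent gives `v_q(p^q - 1) = v_q(p - 1) + 1`, and as
`p^q - 1 = (p - 1) A` this says `v_q(A) = 1`; so `q ∣ A`, and `A > p > q` forces another prime
factor. If a prime `r ≠ q` divides `A`, then `p` has order exactly `q` modulo `r`, so
`q ∣ r - 1`. This rules out `r = 2`, and as `q` is odd, `2q ∣ r - 1`. Hence `r ≥ 2q + 1 ≥ p`,
and `r ≠ p` because `A ≡ 1 (mod p)`.
-/

open Finset

theorem padicValNat_geom_sum {q p n : ℕ} [Fact q.Prime] (hq : Odd q) (hp : 1 < p)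
    (hqp : q ∣ p - 1) (hn : n ≠ 0) :
    padicValNat q (∑ i ∈ range n, p ^ i) = padicValNat q n := by
  have hqp' : ¬q ∣ p := fun h => (Fact.out : q.Prime).one_lt.ne'
    (Nat.dvd_one.mp (by simpa [Nat.sub_sub_self hp.le] using Nat.dvd_sub h hqp))
  have hlte := padicValNat.pow_sub_pow hq hp hqp hqp' hn
  rw [one_pow, ← geom_sum_mul_of_one_le hp.le, padicValNat.mul (by positivity) (by omega)] at hlte
  omega

theorem Nat.Prime.not_dvd_of_dvd_geom_sum {r p n : ℕ} (hr : r.Prime) (hn : n ≠ 0)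
    (hdvd : r ∣ ∑ i ∈ range n, p ^ i) : ¬r ∣ p := by
  intro hrp
  obtain ⟨m, rfl⟩ := Nat.exists_eq_succ_of_ne_zero hn
  rw [geom_sum_succ] at hdvd
  exact hr.one_lt.ne' (Nat.dvd_one.mp ((Nat.dvd_add_right (dvd_mul_of_dvd_left hrp _)).mp hdvd))

theorem Nat.Prime.dvd_sub_one_of_dvd_geom_sum {q r p : ℕ} (hq : q.Prime) (hr : r.Prime)
    (hrq : r ≠ q) (hdvd : r ∣ ∑ i ∈ range q, p ^ i) : q ∣ r - 1 := by
  have := Fact.mk hq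
  have := Fact.mk hr
  have hsum : ∑ i ∈ range q, (p : ZMod r) ^ i = 0 :=
    mod_cast (ZMod.natCast_eq_zero_iff _ r).mpr hdvd
  have hpow : (p : ZMod r) ^ q = 1 := by
    rw [← sub_eq_zero, ← mul_geom_sum, hsum, mul_zero]
  have hp0 : (p : ZMod r) ≠ 0 := by
    rintro h
    rw [h, zero_pow hq.ne_zero] at hpow
    exact zero_ne_one hpow
  have hp1 : (p : ZMod r) ≠ 1 := by
    rintro h
    simp only [h, one_pow, sum_const, card_range, nsmul_eq_mul, mul_one,
      ZMod.natCast_eq_zero_iff] at hsum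
    exact hrq ((Nat.prime_dvd_prime_iff_eq hr hq).mp hsum)
  rw [← orderOf_eq_prime hpow hp1]
  exact ZMod.orderOf_dvd_card_sub_one hp0

theorem Nat.Prime.two_mul_add_one_le_of_dvd_geom_sum {q r p : ℕ} (hq : q.Prime) (hqo : Odd q)
    (hr : r.Prime) (hrq : r ≠ q) (hdvd : r ∣ ∑ i ∈ range q, p ^ i) : 2 * q + 1 ≤ r := by
  have hqr := hq.dvd_sub_one_of_dvd_geom_sum hr hrq hdvd
  have hr2 : r ≠ 2 := by
    rintro rfl
    exact hq.one_lt.ne' (Nat.dvd_one.mp hqr)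
  have h2r : 2 ∣ r - 1 := by
    have := hr.odd_of_ne_two hr2
    grind
  have := Nat.le_of_dvd (by have := hr.two_le; omega)
    (Nat.Coprime.mul_dvd_of_dvd_of_dvd (Nat.coprime_two_left.mpr hqo) h2r hqr)
  omega

theorem exists_prime_dvd_ne_of_padicValNat_eq_one {n q : ℕ} (hq : q.Prime) (hnq : n ≠ q)
    (hval : padicValNat q n = 1) : ∃ r, r.Prime ∧ r ∣ n ∧ r ≠ q := by
  have := Fact.mk hq
  by_contra! h
  have hn : n ≠ 0 := by
    rintro rfl
    simp at hval
  have hpow := Nat.eq_prime_pow_of_unique_prime_dvd hn (h _)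
  rw [hpow, padicValNat.prime_pow] at hval
  rw [hpow, hval, pow_one] at hnq
  exact hnq rfl

/-- Theorem 4: if `q` is an odd prime and `p ∈ {q + 1, 2q + 1}`, then for
`A = (p^q - 1)/(p - 1) = 1 + p + ⋯ + p^(q-1)`, `q` divides `A`, every prime
divisor of `A` other than `q` exceeds `p`, and `A` has at least two distinct
prime divisors. -/
theorem stmt_3 (p q : ℕ) (hq : q.Prime) (hqo : Odd q)
    (hp : p = q + 1 ∨ p = 2 * q + 1)
    (A : ℕ) (hA : A = ∑ i ∈ Finset.range q, p ^ i) :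
    q ∣ A ∧ (∀ r : ℕ, r.Prime → r ∣ A → r ≠ q → p < r) ∧
      ∃ r s : ℕ, r.Prime ∧ s.Prime ∧ r ≠ s ∧ r ∣ A ∧ s ∣ A := by
  have := Fact.mk hq
  have hq1 := hq.one_lt
  have hqp : q ∣ p - 1 := by rcases hp with rfl | rfl <;> simp
  have hval : padicValNat q A = 1 := by
    rw [hA, padicValNat_geom_sum hqo (by omega) hqp hq.ne_zero, padicValNat_self]
  have hpA : p ≤ A := by
    simpa [hA] using
      single_le_sum (fun i _ => Nat.zero_le (p ^ i)) (mem_range.mpr hq1)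
  obtain ⟨s, hs, hsA, hsq⟩ := exists_prime_dvd_ne_of_padicValNat_eq_one hq (by omega) hval
  have hqA : q ∣ A := dvd_of_one_le_padicValNat hval.ge
  refine ⟨hqA, fun r hr hrA hrq => ?_, q, s, hq, hs, hsq.symm, hqA, hsA⟩
  rw [hA] at hrA
  have hrp : r ≠ p := fun h => hr.not_dvd_of_dvd_geom_sum hq.ne_zero hrA (h ▸ dvd_rfl)
  have := hq.two_mul_add_one_le_of_dvd_geom_sum hqo hr hrq hrA
  omega
end

section
/- Let x and z be natural numbers and let y be a prime number. Then 2^x = (y^z - 1)/(y - 1) holds if and only if z = 2 and y = 2^x - 1 (so y is a Mersenne prime). -/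
/-!
For odd `y` the sum `1 + y + ⋯ + y^(z-1)` is `≡ z (mod 2)`, so if it is a power of two with
`z > 2`, then `z = 2m` is even and the sum factors as `(1 + y)(1 + y² + ⋯ + (y²)^(m-1))`. The
second factor is again a power of two, so induction with `y²` in place of `y` leaves `m = 2`,
which is impossible since `y² + 1 ≡ 2 (mod 4)`. For `y = 2` the sum is odd.
-/

open Finset

theorem geom_sum_two_mul {R : Type*} [CommSemiring R] (y : R) (m : ℕ) :
    ∑ i ∈ range (2 * m), y ^ i = (1 + y) * ∑ j ∈ range m, (y ^ 2) ^ j := by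
  induction m with
  | zero => simp
  | succ m ih =>
    rw [Nat.mul_succ, sum_range_succ, sum_range_succ, sum_range_succ, ih]
    ring

theorem Odd.even_geom_sum_iff {y : ℕ} (hy : Odd y) (n : ℕ) :
    Even (∑ i ∈ range n, y ^ i) ↔ Even n := by
  induction n with
  | zero => simp
  | succ n ih =>
    have : ¬Even (y ^ n) := Nat.not_even_iff_odd.2 hy.pow
    simp [geom_sum_succ', Nat.even_add, Nat.even_add_one, ih, this]

theorem Odd.sq_add_one_ne_two_pow {y : ℕ} (hy : Odd y) (hy1 : 1 < y) (a : ℕ) :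
    y ^ 2 + 1 ≠ 2 ^ a := by
  intro h
  obtain ⟨t, rfl⟩ := hy
  have ha : 2 ≤ a := by
    by_contra! ha
    interval_cases a <;> nlinarith
  obtain ⟨b, rfl⟩ := Nat.exists_eq_add_of_le ha
  rw [pow_add] at h
  ring_nf at h
  omega

theorem Odd.eq_one_or_two_of_geom_sum_eq_two_pow {y z k : ℕ} (hy : Odd y) (hy1 : 1 < y)
    (h : ∑ i ∈ range z, y ^ i = 2 ^ k) : z = 1 ∨ z = 2 := by
  induction z using Nat.strong_induction_on generalizing y k with
  | _ z ih =>
  obtain hz | hz := le_or_gt z 2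
  · interval_cases z
    · exact absurd h.symm (by rw [sum_range_zero]; positivity)
    · exact .inl rfl
    · exact .inr rfl
  exfalso
  have hk : k ≠ 0 := by
    rintro rfl
    have : y ^ 1 ≤ ∑ i ∈ range z, y ^ i :=
      single_le_sum (fun _ _ ↦ Nat.zero_le _) (mem_range.2 (by omega))
    rw [pow_one, h, pow_zero] at this
    omega
  have hz_even : Even z := by
    rw [← hy.even_geom_sum_iff, h]
    exact Nat.even_pow.2 ⟨even_two, hk⟩
  obtain ⟨m, rfl⟩ := even_iff_two_dvd.1 hz_even
  rw [geom_sum_two_mul] at h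
  obtain ⟨a, -, ha⟩ := (Nat.dvd_prime_pow Nat.prime_two).1 (Dvd.intro_left _ h)
  obtain rfl | rfl := ih m (by omega) hy.pow (Nat.one_lt_pow two_ne_zero hy1) ha
  · omega
  · exact hy.sq_add_one_ne_two_pow hy1 a (by simpa using ha)

theorem geom_sum_two_ne_two_pow {x : ℕ} (hx : 0 < x) (z : ℕ) :
    ∑ i ∈ range z, 2 ^ i ≠ 2 ^ x := by
  obtain ⟨x, rfl⟩ := Nat.exists_eq_add_of_lt hx
  cases z with
  | zero =>
    rw [sum_range_zero]
    exact (pow_ne_zero _ two_ne_zero).symm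
  | succ z =>
    rw [geom_sum_succ, pow_succ]
    omega

theorem stmt_5_general (x z y : ℕ) (hx : 0 < x) (hy : y.Prime) :
    2 ^ x = ∑ i ∈ Finset.range z, y ^ i ↔ z = 2 ∧ y = 2 ^ x - 1 := by
  constructor
  · intro h
    have hy2 : y ≠ 2 := by
      rintro rfl
      exact geom_sum_two_ne_two_pow hx z h.symm
    obtain rfl | rfl :=
      (hy.odd_of_ne_two hy2).eq_one_or_two_of_geom_sum_eq_two_pow hy.one_lt h.symm
    · rw [geom_sum_one, Nat.pow_eq_one] at h
      omega
    · rw [geom_sum_two] at h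
      exact ⟨rfl, by omega⟩
  · rintro ⟨rfl, rfl⟩
    rw [geom_sum_two, Nat.sub_add_cancel Nat.one_le_two_pow]

/-- Task 1: for positive naturals `x, z` and a prime `y`,
`2^x = (y^z - 1)/(y - 1) = 1 + y + ⋯ + y^(z-1)` holds iff `z = 2` and
`y = 2^x - 1` (a Mersenne prime). -/
theorem stmt_5 (x z y : ℕ) (hx : 0 < x) (hz : 0 < z) (hy : y.Prime) :
    2 ^ x = ∑ i ∈ Finset.range z, y ^ i ↔ z = 2 ∧ y = 2 ^ x - 1 :=
  stmt_5_general x z y hx hy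
end

section
/- Let x, y, z be natural numbers. Then (x + y)^z = 2^z · (x^z - y^z) holds if and only if there exists a natural number t such that (x, y, z) = (3t, t, 1) or (x, y, z) = (5t, 3t, 2). Equivalently, when x + y is even, ((x+y)/2)^z = x^z - y^z has exactly these solutions. -/
/-!
With `m = x + y` and `d = x - y` the equation reads `m ^ z = (m + d) ^ z - (m - d) ^ z`. For
`z = 1, 2` this is linear in `d / m` and gives the two families. For `z ≥ 3` the equation is
homogeneous, so we may take `m, d` coprime with `0 < d < m`, and expand modulo `m ^ 2`: for odd `z`
this gives `m ^ 2 ∣ 2 * d ^ z`, impossible as `m ≥ 2`; for even `z` it gives `m ∣ 2 * z`, which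
contradicts the binomial bound `(m + d) ^ z - (m - d) ^ z > 2 * z * m ^ (z - 1) * d ≥ m ^ z`.
-/

open Finset

section CommRing

variable {R : Type*} [CommRing R]

theorem sq_dvd_add_pow_sub_sub_pow_sub_of_odd (m d : R) {n : ℕ} (hn : Odd n) :
    m ^ 2 ∣ (m + d) ^ n - (m - d) ^ n - 2 * d ^ n := by
  have h₁ := sq_dvd_add_pow_sub_sub m d n
  have h₂ := sq_dvd_add_pow_sub_sub m (-d) n
  rw [hn.neg_pow, (Nat.Odd.sub_odd hn odd_one).neg_pow] at h₂
  convert dvd_sub h₁ h₂ using 1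
  ring

theorem sq_dvd_add_pow_sub_sub_pow_sub_of_even (m d : R) {n : ℕ} (hn : Even n) :
    m ^ 2 ∣ (m + d) ^ n - (m - d) ^ n - 2 * n * m * d ^ (n - 1) := by
  rcases n with - | n
  · simp
  have h₁ := sq_dvd_add_pow_sub_sub m d (n + 1)
  have h₂ := sq_dvd_add_pow_sub_sub m (-d) (n + 1)
  simp only [Nat.add_sub_cancel] at h₁ h₂ ⊢
  rw [hn.neg_pow, (Nat.not_even_iff_odd.mp (Nat.even_add_one.mp hn)).neg_pow] at h₂
  convert dvd_sub h₁ h₂ using 1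
  ring

end CommRing

theorem two_mul_mul_pow_mul_lt_add_pow_sub_sub_pow {R : Type*} [CommRing R] [LinearOrder R]
    [IsStrictOrderedRing R] {m d : R} (hm : 0 < m) (hd : 0 < d) {n : ℕ} (hn : 3 ≤ n) :
    2 * n * m ^ (n - 1) * d < (m + d) ^ n - (m - d) ^ n := by
  set f : ℕ → R := fun k => m ^ k * (d ^ (n - k) - (-d) ^ (n - k)) * n.choose k with hf
  have hsum : (m + d) ^ n - (m - d) ^ n = ∑ k ∈ range (n + 1), f k := by
    rw [sub_eq_add_neg m, add_pow, add_pow, ← sum_sub_distrib]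
    exact sum_congr rfl fun k _ => by ring
  have hf_nonneg (k : ℕ) : 0 ≤ f k := by
    have : (-d) ^ (n - k) ≤ d ^ (n - k) :=
      (le_abs_self _).trans_eq (by rw [abs_pow, abs_neg, abs_of_pos hd])
    exact mul_nonneg (mul_nonneg (pow_nonneg hm.le _) (sub_nonneg.mpr this)) (Nat.cast_nonneg _)
  have hf_top : f (n - 1) = 2 * n * m ^ (n - 1) * d := by
    simp only [hf, Nat.sub_sub_self (by omega : 1 ≤ n), Nat.choose_symm (by omega : 1 ≤ n),
      Nat.choose_one_right]
    ring
  have hf_pos : 0 < f (n - 3) := by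
    simp only [hf, Nat.sub_sub_self hn, Nat.choose_symm hn]
    have : 0 < (n.choose 3 : R) := by exact_mod_cast Nat.choose_pos hn
    rw [show d ^ 3 - (-d) ^ 3 = 2 * d ^ 3 by ring]
    positivity
  have hpair : f (n - 1) + f (n - 3) ≤ ∑ k ∈ range (n + 1), f k := by
    rw [← sum_pair (show n - 1 ≠ n - 3 by omega)]
    refine sum_le_sum_of_subset_of_nonneg (fun k hk => ?_) fun k _ _ => hf_nonneg k
    simp only [mem_insert, mem_singleton, mem_range] at hk ⊢
    omega
  linarith

theorem pow_ne_add_pow_sub_sub_pow_of_isCoprime {m d : ℤ} (hmd : IsCoprime m d) (hd : 0 < d)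
    (hdm : d < m) {n : ℕ} (hn : 3 ≤ n) : m ^ n ≠ (m + d) ^ n - (m - d) ^ n := by
  intro h
  have hm_sq_dvd : m ^ 2 ∣ m ^ n := pow_dvd_pow m (by omega)
  rcases Nat.even_or_odd n with hev | hodd
  · have hdvd : m ^ 2 ∣ m * (2 * n * d ^ (n - 1)) := by
      have := dvd_sub hm_sq_dvd (sq_dvd_add_pow_sub_sub_pow_sub_of_even m d hev)
      rwa [← h, sub_sub_cancel, show 2 * (n : ℤ) * m * d ^ (n - 1) = m * (2 * n * d ^ (n - 1))
        by ring] at this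
    rw [sq] at hdvd
    have hm_dvd : m ∣ 2 * n :=
      hmd.pow_right.dvd_of_dvd_mul_right (Int.dvd_of_mul_dvd_mul_left (by omega) hdvd)
    have hm_le : m ≤ 2 * n := Int.le_of_dvd (by positivity) hm_dvd
    have hbound := two_mul_mul_pow_mul_lt_add_pow_sub_sub_pow (hd.trans hdm) hd hn
    rw [← h, ← pow_sub_one_mul (by omega : n ≠ 0)] at hbound
    have hpow : 0 < m ^ (n - 1) := pow_pos (hd.trans hdm) _
    have : m ^ (n - 1) * m ≤ 2 * n * m ^ (n - 1) * d :=
      calc m ^ (n - 1) * m ≤ m ^ (n - 1) * (2 * n) := mul_le_mul_of_nonneg_left hm_le hpow.le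
        _ = 2 * n * m ^ (n - 1) * 1 := by ring
        _ ≤ 2 * n * m ^ (n - 1) * d := mul_le_mul_of_nonneg_left (by omega) (by positivity)
    linarith
  · have hdvd : m ^ 2 ∣ 2 * d ^ n := by
      have := dvd_sub hm_sq_dvd (sq_dvd_add_pow_sub_sub_pow_sub_of_odd m d hodd)
      rwa [← h, sub_sub_cancel] at this
    have := Int.le_of_dvd two_pos (hmd.pow.dvd_of_dvd_mul_right hdvd)
    nlinarith

theorem pow_ne_add_pow_sub_sub_pow {m d : ℤ} (hd : 0 < d) (hdm : d < m) {n : ℕ} (hn : 3 ≤ n) :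
    m ^ n ≠ (m + d) ^ n - (m - d) ^ n := by
  obtain ⟨g, m, d, hg, hmd, rfl, rfl⟩ :=
    Int.exists_gcd_one' (Int.gcd_pos_of_ne_zero_right m hd.ne')
  have hg : (0 : ℤ) < g := by exact_mod_cast hg
  rw [← add_mul, ← sub_mul, mul_pow, mul_pow, mul_pow, ← sub_mul]
  exact fun h => pow_ne_add_pow_sub_sub_pow_of_isCoprime (Int.isCoprime_iff_gcd_eq_one.mpr hmd)
    (pos_of_mul_pos_left hd hg.le) (lt_of_mul_lt_mul_right hdm hg.le) hn
    (mul_right_cancel₀ (pow_ne_zero n hg.ne') h)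

theorem stmt_9_general (x y z : ℕ) (hy : 0 < y) (hz : 0 < z) :
    ((x : ℤ) + y) ^ z = 2 ^ z * ((x : ℤ) ^ z - (y : ℤ) ^ z) ↔
      ∃ t : ℕ, 0 < t ∧ ((x = 3 * t ∧ y = t ∧ z = 1) ∨ (x = 5 * t ∧ y = 3 * t ∧ z = 2)) := by
  constructor
  · intro h
    rcases (show z = 1 ∨ z = 2 ∨ 3 ≤ z by omega) with rfl | rfl | hz3
    · simp only [pow_one] at h
      exact ⟨y, hy, Or.inl ⟨by omega, rfl, rfl⟩⟩
    · have : (3 * (x : ℤ) - 5 * y) * (x + y) = 0 := by linear_combination -h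
      have : 3 * x = 5 * y := by
        rcases mul_eq_zero.mp this with h | h <;> omega
      exact ⟨y / 3, by omega, Or.inr ⟨by omega, by omega, rfl⟩⟩
    · have hyx : (y : ℤ) < x := by
        have hpos : (0 : ℤ) < 2 ^ z * (x ^ z - y ^ z) := h ▸ by positivity
        have : (0 : ℤ) < x ^ z - y ^ z := pos_of_mul_pos_right hpos (by positivity)
        exact lt_of_pow_lt_pow_left₀ z (by positivity) (sub_pos.mp this)
      exfalso
      refine pow_ne_add_pow_sub_sub_pow (m := x + y) (d := x - y) (by omega) (by omega) hz3 ?_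
      rw [h, mul_sub, ← mul_pow, ← mul_pow]
      ring
  · rintro ⟨t, -, ⟨rfl, rfl, rfl⟩ | ⟨rfl, rfl, rfl⟩⟩ <;> push_cast <;> ring

/-- Task 4: for positive naturals `x, y, z`, the equation
`(x + y)^z = 2^z * (x^z - y^z)` (equivalently `((x+y)/2)^z = x^z - y^z`,
understood over the integers) holds iff `(x, y, z) = (3t, t, 1)` or
`(x, y, z) = (5t, 3t, 2)` for some positive natural `t`. -/
theorem stmt_9 (x y z : ℕ) (hx : 0 < x) (hy : 0 < y) (hz : 0 < z) :
    ((x : ℤ) + y) ^ z = 2 ^ z * ((x : ℤ) ^ z - (y : ℤ) ^ z) ↔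
      ∃ t : ℕ, 0 < t ∧ ((x = 3 * t ∧ y = t ∧ z = 1) ∨ (x = 5 * t ∧ y = 3 * t ∧ z = 2)) :=
  stmt_9_general x y z hy hz
end

section
/- Let x, y, z be natural numbers. Then (x + y)^z = (2x)^z + y^z holds if and only if there exists a natural number t such that x = 2t, y = 3t and z = 2. -/
/-!
For `z ≤ 2` the equation is elementary. For `z ≥ 3`, divide out `gcd(x, y)` to get coprime `d, b`
with `(d + b)^z = (2d)^z + b^z`. Then `d < b`, and since `d + b ≡ 2d (mod b - d)` the difference
`b - d` divides `b^z`, so `b = d + 1`. Expanding `(1 + d)^z` and `(1 + 2d)^z` modulo `d²` gives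
`d ∣ z`. Finally Bernoulli's inequality `(2d + 1)^z > (2d)^z + z (2d)^(z-1)` would force
`(d + 1)^z > z (2d)^(z-1)`, which fails both for `2d ≤ z` and for `d = z`, where it would say
`(1 + 1/z)^z > 2^(z-1) ≥ 4 > e`.
-/

lemma pow_add_mul_pow_lt_add_one_pow {a n : ℕ} (ha : 0 < a) (hn : 2 ≤ n) :
    a ^ n + n * a ^ (n - 1) < (a + 1) ^ n := by
  obtain ⟨m, rfl⟩ : ∃ m, n = m + 2 := ⟨n - 2, by omega⟩
  have bernoulli := pow_add_mul_le_add_pow (a := a) (b := 1) (by positivity) (by positivity) (m + 1)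
  simp only [mul_one, Nat.add_sub_cancel, Nat.cast_id] at bernoulli
  have : 0 < a ^ m := by positivity
  calc a ^ (m + 2) + (m + 2) * a ^ (m + 2 - 1)
      < (a + 1) * (a ^ (m + 1) + (m + 1) * a ^ m) := by
        rw [show m + 2 - 1 = m + 1 by omega]; ring_nf; omega
    _ ≤ (a + 1) * (a + 1) ^ (m + 1) := by gcongr
    _ = (a + 1) ^ (m + 2) := by ring

lemma add_one_pow_lt_two_pow_mul_pow_self {n : ℕ} (hn : 3 ≤ n) :
    (n + 1) ^ n < 2 ^ (n - 1) * n ^ n := by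
  have hsplit : ((n : ℝ) + 1) ^ n = (1 + (n : ℝ)⁻¹) ^ n * n ^ n := by
    rw [← mul_pow]; field_simp
  have hfour : (4 : ℝ) ≤ 2 ^ (n - 1) := by
    exact_mod_cast (Nat.pow_le_pow_right (by norm_num) (by omega : 2 ≤ n - 1) : 2 ^ 2 ≤ 2 ^ (n - 1))
  have : ((n : ℝ) + 1) ^ n < 2 ^ (n - 1) * n ^ n := by
    calc ((n : ℝ) + 1) ^ n ≤ Real.exp 1 * n ^ n := by
          rw [hsplit]; gcongr; exact Real.one_add_inv_pow_le_exp
      _ < 4 * n ^ n := by gcongr; linarith [Real.exp_one_lt_d9]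
      _ ≤ 2 ^ (n - 1) * n ^ n := by gcongr
  exact_mod_cast this

lemma eq_add_one_of_add_pow_eq {d b z : ℕ} (hco : d.Coprime b) (hb : 0 < b)
    (h : (d + b) ^ z = (2 * d) ^ z + b ^ z) : b = d + 1 := by
  have hlt : 2 * d < d + b :=
    lt_of_pow_lt_pow_left₀ z (by positivity) (by rw [h]; have := pow_pos hb z; omega)
  have hdvd : b - d ∣ b ^ z := by
    have := Nat.sub_dvd_pow_sub_pow (d + b) (2 * d) z
    rwa [h, Nat.add_sub_cancel_left, show d + b - 2 * d = b - d by omega] at this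
  have hco' : (b - d).Coprime b := (Nat.coprime_self_sub_left (by omega)).mpr hco
  have := (hco'.pow_right z).eq_one_of_dvd hdvd
  omega

lemma dvd_of_two_mul_add_one_pow_eq {d z : ℕ} (hd : 0 < d) (hz : 2 ≤ z)
    (h : (2 * d + 1) ^ z = (2 * d) ^ z + (d + 1) ^ z) : d ∣ z := by
  have hexp_d := sq_dvd_add_pow_sub_sub (d : ℤ) 1 z
  have hexp_two_d := (pow_dvd_pow_of_dvd (dvd_mul_left (d : ℤ) 2) 2).trans
    (sq_dvd_add_pow_sub_sub (2 * d : ℤ) 1 z)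
  have hpow : (d : ℤ) ^ 2 ∣ (2 * d) ^ z :=
    (pow_dvd_pow_of_dvd (dvd_mul_left (d : ℤ) 2) 2).trans (pow_dvd_pow _ hz)
  simp only [one_pow, one_mul] at hexp_d hexp_two_d
  have hcast : ((2 * d + 1) ^ z : ℤ) = (2 * d) ^ z + (d + 1) ^ z := by exact_mod_cast h
  have hzd : (d : ℤ) * d ∣ z * d := by
    rw [← sq, show (z * d : ℤ) = ((1 + d) ^ z - d * z - 1) + (2 * d) ^ z
        - ((1 + 2 * d) ^ z - 2 * d * z - 1) by linear_combination hcast]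
    exact (hexp_d.add hpow).sub hexp_two_d
  exact Nat.dvd_of_mul_dvd_mul_right hd (by exact_mod_cast hzd)

lemma add_one_pow_le_of_dvd {d z : ℕ} (hd : 0 < d) (hdz : d ∣ z) (hz : 3 ≤ z) :
    (d + 1) ^ z ≤ z * (2 * d) ^ (z - 1) := by
  obtain ⟨k, rfl⟩ := hdz
  rcases k with _ | _ | k
  · omega
  · have hd3 : 3 ≤ d := by omega
    calc (d + 1) ^ (d * 1) ≤ 2 ^ (d - 1) * d ^ d := by
          simpa using (add_one_pow_lt_two_pow_mul_pow_self hd3).le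
      _ = d * 1 * (2 * d) ^ (d * 1 - 1) := by
          rw [mul_one, mul_pow, ← mul_assoc, mul_comm d, mul_assoc, ← pow_succ',
            Nat.sub_add_cancel hd]
  · have h2d : 2 * d ≤ d * (k + 2) := by nlinarith
    calc (d + 1) ^ (d * (k + 2)) ≤ (2 * d) ^ (d * (k + 2)) := by gcongr; omega
      _ = 2 * d * (2 * d) ^ (d * (k + 2) - 1) := by
          rw [← pow_succ', Nat.sub_add_cancel (by omega)]
      _ ≤ d * (k + 2) * (2 * d) ^ (d * (k + 2) - 1) := by gcongr

lemma two_mul_add_one_pow_ne {d z : ℕ} (hd : 0 < d) (hz : 3 ≤ z) :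
    (2 * d + 1) ^ z ≠ (2 * d) ^ z + (d + 1) ^ z := by
  intro h
  have hbernoulli := pow_add_mul_pow_lt_add_one_pow (a := 2 * d) (by omega) (by omega : 2 ≤ z)
  have hupper := add_one_pow_le_of_dvd hd (dvd_of_two_mul_add_one_pow_eq hd (by omega) h) hz
  omega

lemma add_pow_ne_of_three_le {x y z : ℕ} (hx : 0 < x) (hy : 0 < y) (hz : 3 ≤ z) :
    (x + y) ^ z ≠ (2 * x) ^ z + y ^ z := by
  intro h
  obtain ⟨g, d, b, hg, hco, rfl, rfl⟩ := Nat.exists_coprime' (Nat.gcd_pos_of_pos_left y hx)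
  have hcancel : (d + b) ^ z = (2 * d) ^ z + b ^ z := by
    apply Nat.eq_of_mul_eq_mul_left (pow_pos hg z)
    calc g ^ z * (d + b) ^ z = (d * g + b * g) ^ z := by rw [← add_mul, mul_pow, mul_comm]
      _ = (2 * (d * g)) ^ z + (b * g) ^ z := h
      _ = g ^ z * ((2 * d) ^ z + b ^ z) := by simp only [mul_pow]; ring
  obtain rfl := eq_add_one_of_add_pow_eq hco (Nat.pos_of_mul_pos_right hy) hcancel
  rw [show d + (d + 1) = 2 * d + 1 by ring] at hcancel
  exact two_mul_add_one_pow_ne (Nat.pos_of_mul_pos_right hx) hz hcancel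

lemma add_sq_eq_two_mul_sq_add_sq_iff {x y : ℕ} (hx : 0 < x) :
    (x + y) ^ 2 = (2 * x) ^ 2 + y ^ 2 ↔ 2 * y = 3 * x := by
  rw [← Nat.mul_left_cancel_iff hx]
  constructor <;> intro h <;> nlinarith

theorem stmt_10_general (x y z : ℕ) (hx : 0 < x) (hy : 0 < y) :
    (x + y) ^ z = (2 * x) ^ z + y ^ z ↔
      ∃ t : ℕ, 0 < t ∧ x = 2 * t ∧ y = 3 * t ∧ z = 2 := by
  constructor
  · intro h
    rcases Nat.lt_or_ge z 3 with hz | hz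
    · interval_cases z
      · simp at h
      · simp only [pow_one] at h; omega
      · have h23 := (add_sq_eq_two_mul_sq_add_sq_iff hx).mp h
        obtain ⟨t, rfl⟩ : 2 ∣ x := by omega
        exact ⟨t, by omega, rfl, by omega, rfl⟩
    · exact absurd h (add_pow_ne_of_three_le hx hy hz)
  · rintro ⟨t, -, rfl, rfl, rfl⟩
    ring

/-- Task 5: for positive naturals `x, y, z`, the equation
`(x + y)^z = (2x)^z + y^z` holds iff `x = 2t`, `y = 3t` and `z = 2` for some
positive natural `t`. -/
theorem stmt_10 (x y z : ℕ) (hx : 0 < x) (hy : 0 < y) (hz : 0 < z) :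
    (x + y) ^ z = (2 * x) ^ z + y ^ z ↔
      ∃ t : ℕ, 0 < t ∧ x = 2 * t ∧ y = 3 * t ∧ z = 2 :=
  stmt_10_general x y z hx hy
end

section
/- Let x and y be natural numbers with y > x. Then (y - x)^{x+y} = x^y holds if and only if x = 1 and y = 2. -/
/-
Put `d = y - x`, so the equation reads `d ^ (2x + d) = x ^ (x + d)`. Dividing `x` and `d` by their
gcd `g` to get coprime `s, t`, the equation becomes `d ^ (2s + t) = x ^ (s + t)` with coprime
exponents, so `d = c ^ (s + t)` and `x = c ^ (2s + t) = c ^ s * d`. Dividing by `g` again gives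
`s = c ^ s * t ≥ c ^ s`, which forces `c = 1` because `s < c ^ s` for `c ≥ 2`.
-/

theorem Nat.coprime_two_mul_add_add {s t : ℕ} (hst : s.Coprime t) :
    (2 * s + t).Coprime (s + t) := by
  rw [two_mul, add_assoc, Nat.coprime_add_self_left, add_comm, Nat.coprime_add_self_right]
  exact hst

theorem Nat.eq_one_of_pow_two_mul_add_eq_pow {x d : ℕ} (hd : 0 < d)
    (h : d ^ (2 * x + d) = x ^ (x + d)) : x = 1 ∧ d = 1 := by
  obtain ⟨g, s, t, hg, hst, rfl, rfl⟩ := Nat.exists_coprime' (Nat.gcd_pos_of_pos_right x hd)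
  have ht : 0 < t := Nat.pos_of_mul_pos_right hd
  have hreduced : (t * g) ^ (2 * s + t) = (s * g) ^ (s + t) := by
    refine Nat.pow_left_injective hg.ne' ?_
    simpa only [← pow_mul, add_mul, mul_assoc] using h
  obtain ⟨c, hd_eq, hx_eq⟩ :=
    Nat.exists_eq_pow_of_exponent_coprime_of_pow_eq_pow (Nat.coprime_two_mul_add_add hst) hreduced
  have hs : s = c ^ s * t := by
    refine Nat.eq_of_mul_eq_mul_right hg ?_
    rw [mul_assoc, hd_eq, ← pow_add, hx_eq]
    ring_nf
  have hc_le : c ≤ 1 := by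
    by_contra! hc
    have := Nat.lt_pow_self (n := s) hc
    have := Nat.le_mul_of_pos_right (c ^ s) ht
    omega
  have hc_ne : c ≠ 0 := by
    rintro rfl
    rw [zero_pow (by omega)] at hd_eq
    omega
  obtain rfl : c = 1 := by omega
  rw [one_pow] at hd_eq hx_eq
  exact ⟨hx_eq, hd_eq⟩

theorem stmt_12_general (x y : ℕ) (hxy : x < y) :
    (y - x) ^ (x + y) = x ^ y ↔ x = 1 ∧ y = 2 := by
  constructor
  · obtain ⟨d, rfl⟩ := Nat.exists_eq_add_of_le hxy.le
    rw [Nat.add_sub_cancel_left, ← add_assoc, ← two_mul]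
    intro h
    have := Nat.eq_one_of_pow_two_mul_add_eq_pow (by omega) h
    omega
  · rintro ⟨rfl, rfl⟩
    rfl

/-- Task 7: for positive naturals `x, y` with `y > x`, the equation
`(y - x)^(x+y) = x^y` holds iff `x = 1` and `y = 2`. -/
theorem stmt_12 (x y : ℕ) (hx : 0 < x) (hxy : x < y) :
    (y - x) ^ (x + y) = x ^ y ↔ x = 1 ∧ y = 2 :=
  stmt_12_general x y hxy
end

section
/- There are no natural numbers x and y with y > x satisfying (y - x)^{x+y} = y^x. -/
/-!
With `g = gcd (x + y) x`, `a = x / g` and `s = (x + y) / g`, the equation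
`(y - x) ^ (x + y) = y ^ x` forces `y - x = t ^ a` and `y = t ^ s` for some `t ≥ 2`.
Then `x = t ^ s - t ^ a`, and `s * x = a * (x + y)` becomes, with `T = t ^ (s - a)`,
`s * (T - 1) = a * (2 * T - 1)`, i.e. `(s - 2 * a) * T = s - a`. This is impossible since
`T ≥ 2 ^ (s - a) > s - a > 0`.
-/

lemma mul_sub_one_ne_mul_two_mul_sub_one {a s : ℕ} {T : ℤ} (has : a < s)
    (hT : (s - a : ℤ) < T) : (s : ℤ) * (T - 1) ≠ a * (2 * T - 1) := by
  intro h
  have has' : (a : ℤ) < s := by exact_mod_cast has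
  rcases le_or_gt (s : ℤ) (2 * a) with hs | hs <;> nlinarith

lemma mul_pow_sub_pow_ne {a s : ℕ} {t : ℤ} (ht : 2 ≤ t) (has : a < s) :
    (s : ℤ) * (t ^ s - t ^ a) ≠ a * (2 * t ^ s - t ^ a) := by
  have hsplit : t ^ s = t ^ a * t ^ (s - a) := by rw [← pow_add, Nat.add_sub_cancel' has.le]
  have hT : ((s - a : ℕ) : ℤ) < t ^ (s - a) :=
    calc ((s - a : ℕ) : ℤ) < 2 ^ (s - a) := by exact_mod_cast Nat.lt_two_pow_self
      _ ≤ t ^ (s - a) := pow_le_pow_left₀ (by norm_num) ht _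
  rw [Nat.cast_sub has.le] at hT
  intro h
  apply mul_sub_one_ne_mul_two_mul_sub_one has hT
  apply mul_left_cancel₀ (pow_ne_zero a (by positivity : t ≠ 0))
  rw [hsplit] at h
  linear_combination h

/-- Task 8: there are no positive naturals `x, y` with `y > x` satisfying
`(y - x)^(x+y) = y^x`. -/
theorem stmt_13 : ¬ ∃ x y : ℕ, 0 < x ∧ x < y ∧ (y - x) ^ (x + y) = y ^ x := by
  rintro ⟨x, y, hx, hxy, h⟩
  obtain ⟨t, hd, hy⟩ := Nat.exists_eq_pow_of_pow_eq_pow (Or.inr hx.ne') h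
  set g := Nat.gcd (x + y) x
  have hg : g ∣ x := Nat.gcd_dvd_right _ _
  have hgs : g ∣ x + y := Nat.gcd_dvd_left _ _
  have hcross : (x + y) / g * x = x / g * (x + y) := by
    rw [Nat.div_mul_right_comm hgs, Nat.div_mul_right_comm hg, mul_comm]
  have has : x / g < (x + y) / g := Nat.div_lt_div_of_lt_of_dvd hgs (by omega)
  set a := x / g
  set s := (x + y) / g
  have ht : 2 ≤ t := by
    by_contra! ht
    have : t ^ s ≤ 1 := pow_le_one₀ (Nat.zero_le t) (by omega)
    omega
  have hyt : (y : ℤ) = (t : ℤ) ^ s := by exact_mod_cast hy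
  have hxt : (x : ℤ) = (t : ℤ) ^ s - (t : ℤ) ^ a := by
    have := congrArg (Nat.cast : ℕ → ℤ) hd
    push_cast [Nat.cast_sub hxy.le] at this
    linarith
  have hcrossZ : (s : ℤ) * x = a * (x + y) := by exact_mod_cast hcross
  apply mul_pow_sub_pow_ne (t := (t : ℤ)) (by exact_mod_cast ht) has
  linear_combination hcrossZ + ((a : ℤ) - s) * hxt + (a : ℤ) * hyt
end

section
/- Let x and y be natural numbers with x ≥ y. Then (x + y)^{x-y} = x^y holds if and only if x = 1 and y = 1. -/
/-! If `x - y ≤ y`, then `x ^ y = (x + y) ^ (x - y)` divides `(x + y) ^ y`, so `x ∣ x + y`,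
i.e. `x ∣ y`, which forces `x = y` and then `x ^ x = 1`. If `y ≤ x - y`, then
`x ^ y < (x + y) ^ y ≤ (x + y) ^ (x - y)`. -/

theorem Nat.dvd_of_add_pow_eq_pow {x y d : ℕ} (hy : y ≠ 0) (hd : d ≤ y)
    (h : (x + y) ^ d = x ^ y) : x ∣ y := by
  have hpow : x ^ y ∣ (x + y) ^ y := h ▸ pow_dvd_pow _ hd
  exact (Nat.dvd_add_right dvd_rfl).mp ((Nat.pow_dvd_pow_iff hy).mp hpow)

theorem Nat.pow_lt_add_pow {x y d : ℕ} (hy : y ≠ 0) (hd : y ≤ d) : x ^ y < (x + y) ^ d :=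
  calc x ^ y < (x + y) ^ y := Nat.pow_lt_pow_left (by omega) hy
    _ ≤ (x + y) ^ d := Nat.pow_le_pow_right (by omega) hd

/-- Task 9: for positive naturals `x, y` with `x ≥ y`, the equation
`(x + y)^(x-y) = x^y` holds iff `x = 1` and `y = 1`. -/
theorem stmt_14 (x y : ℕ) (hy : 0 < y) (hxy : y ≤ x) :
    (x + y) ^ (x - y) = x ^ y ↔ x = 1 ∧ y = 1 := by
  constructor
  · intro h
    rcases le_total (x - y) y with hd | hd
    · have hdvd : x ∣ y := Nat.dvd_of_add_pow_eq_pow hy.ne' hd h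
      obtain rfl : x = y := le_antisymm (Nat.le_of_dvd hy hdvd) hxy
      rw [Nat.sub_self, pow_zero, eq_comm, pow_eq_one_iff_left hy.ne'] at h
      exact ⟨h, h⟩
    · exact absurd h (Nat.pow_lt_add_pow hy.ne' hd).ne'
  · rintro ⟨rfl, rfl⟩
    rfl
end

section
/- Let x and y be natural numbers with x ≥ y. Then (x + y)^{x-y} = y^x holds if and only if there exists a natural number t such that x = t·(t+1)^{t-1} and y = (t+1)^{t-1}. -/
/-!
Since `y ^ x = y ^ (x - y) * y ^ y`, the power `y ^ (x - y)` divides `(x + y) ^ (x - y)`, so `y ∣ x`.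
Writing `x = y * t`, the factor `y ^ (y * (t - 1))` cancels from both sides and the equation
becomes `((t + 1) ^ (t - 1)) ^ y = y ^ y`, that is `y = (t + 1) ^ (t - 1)`.
-/

lemma dvd_of_add_pow_sub_eq_pow {x y : ℕ} (hxy : y ≤ x) (h : (x + y) ^ (x - y) = y ^ x) :
    y ∣ x := by
  rcases hxy.eq_or_lt with rfl | hlt
  · exact dvd_rfl
  have hdvd : y ^ (x - y) ∣ (x + y) ^ (x - y) := h ▸ pow_dvd_pow y (Nat.sub_le x y)
  exact (Nat.dvd_add_left dvd_rfl).mp ((Nat.pow_dvd_pow_iff (Nat.sub_ne_zero_of_lt hlt)).mp hdvd)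

lemma mul_add_pow_sub_eq_pow_iff {y u : ℕ} (hy : 0 < y) :
    (y * (u + 1) + y) ^ (y * (u + 1) - y) = y ^ (y * (u + 1)) ↔ (u + 2) ^ u = y := by
  have hsum : y * (u + 1) + y = y * (u + 2) := by ring
  have hdiff : y * (u + 1) - y = y * u := by rw [mul_add_one, Nat.add_sub_cancel]
  rw [hsum, hdiff, mul_pow, mul_add_one y u, pow_add,
    Nat.mul_left_cancel_iff (pow_pos hy _), mul_comm y u, pow_mul]
  exact (Nat.pow_left_injective hy.ne').eq_iff

/-- Task 10: for positive naturals `x, y` with `x ≥ y`, the equation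
`(x + y)^(x-y) = y^x` holds iff `x = t·(t+1)^(t-1)` and `y = (t+1)^(t-1)`
for some positive natural `t`. -/
theorem stmt_15 (x y : ℕ) (hy : 0 < y) (hxy : y ≤ x) :
    (x + y) ^ (x - y) = y ^ x ↔
      ∃ t : ℕ, 0 < t ∧ x = t * (t + 1) ^ (t - 1) ∧ y = (t + 1) ^ (t - 1) := by
  constructor
  · intro h
    obtain ⟨n, rfl⟩ := dvd_of_add_pow_sub_eq_pow hxy h
    obtain ⟨u, rfl⟩ : ∃ u, n = u + 1 :=
      Nat.exists_eq_add_one.mpr (Nat.pos_of_ne_zero (by rintro rfl; omega))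
    have hu : (u + 2) ^ u = y := (mul_add_pow_sub_eq_pow_iff hy).mp h
    exact ⟨u + 1, u.succ_pos, by simp [hu, mul_comm], by simp [hu]⟩
  · rintro ⟨t, ht, rfl, rfl⟩
    obtain ⟨u, rfl⟩ := Nat.exists_eq_add_one.mpr ht
    simpa [mul_comm] using (mul_add_pow_sub_eq_pow_iff (y := (u + 2) ^ u) (by positivity)).mpr rfl
end

section
/- Let a, b, c, d be natural numbers with gcd(a, b) = 1, suppose p = c^2 + cd + d^2 is a prime number, and suppose p divides a^2 + ab + b^2. Then there exist nonnegative integers A and B such that (a^2 + ab + b^2)/p = A^2 + AB + B^2. -/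
/-!
The forms `x² + xy + y²` and `x² - xy + y²` are norms of Eisenstein integers, and norms are
multiplicative. If the prime `p = c² + cd + d²` divides `n = a² + ab + b²`, then it divides
`(ad - bc)(ad + bc + bd) = d²n - b²p`, hence one of the two factors. That factor is one
coordinate of a representation `n p = X² - XY + Y²` coming from the product of norms, so `p`
divides both `X` and `Y`, and dividing them by `p` represents `n / p`.
-/

theorem Int.sq_sub_mul_add_sq_eq_natAbs {s t : ℤ} (h : s * t ≤ 0) :
    s ^ 2 - s * t + t ^ 2 = (s.natAbs : ℤ) ^ 2 + s.natAbs * t.natAbs + (t.natAbs : ℤ) ^ 2 := by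
  rw [Int.natCast_natAbs, Int.natCast_natAbs, ← abs_mul, abs_of_nonpos h, sq_abs, sq_abs]
  ring

/-- The pairs `(u, v)`, `(u - v, -v)` and `(u, u - v)` give the same value of `x² - xy + y²`,
and one of them has `xy ≤ 0`. -/
theorem Int.exists_nat_sq_sub_mul_add_sq_eq (u v : ℤ) :
    ∃ A B : ℕ, u ^ 2 - u * v + v ^ 2 = (A : ℤ) ^ 2 + A * B + (B : ℤ) ^ 2 := by
  have hsign : u * v ≤ 0 ∨ (u - v) * -v ≤ 0 ∨ u * (u - v) ≤ 0 := by
    by_contra! h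
    nlinarith [mul_pos h.1 (mul_pos h.2.1 h.2.2), sq_nonneg (u - v)]
  rcases hsign with h | h | h
  · exact ⟨_, _, Int.sq_sub_mul_add_sq_eq_natAbs h⟩
  · exact ⟨_, _, by rw [← Int.sq_sub_mul_add_sq_eq_natAbs h]; ring⟩
  · exact ⟨_, _, by rw [← Int.sq_sub_mul_add_sq_eq_natAbs h]; ring⟩

section Descent

variable {R : Type*} [CommRing R] [IsDomain R]

theorem Prime.exists_sq_sub_mul_add_sq_of_dvd {P n X Y : R} (hP : Prime P)
    (hE : X ^ 2 - X * Y + Y ^ 2 = P * n) (hY : P ∣ Y) :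
    ∃ x y : R, n = P * (x ^ 2 - x * y + y ^ 2) := by
  have hX : P ∣ X := by
    refine hP.dvd_of_dvd_pow (n := 2) ?_
    have hX2 : X ^ 2 = P * n + X * Y - Y ^ 2 := by rw [← hE]; ring
    rw [hX2]
    exact dvd_sub (dvd_add (dvd_mul_right P n) (hY.mul_left X)) (dvd_pow hY two_ne_zero)
  obtain ⟨x, rfl⟩ := hX
  obtain ⟨y, rfl⟩ := hY
  refine ⟨x, y, mul_left_cancel₀ hP.ne_zero ?_⟩
  rw [← hE]
  ring

theorem Prime.exists_sq_sub_mul_add_sq_of_dvd_sq_add_mul_add_sq {a b c d : R}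
    (hp : Prime (c ^ 2 + c * d + d ^ 2)) (hdvd : c ^ 2 + c * d + d ^ 2 ∣ a ^ 2 + a * b + b ^ 2) :
    ∃ x y : R, a ^ 2 + a * b + b ^ 2 = (c ^ 2 + c * d + d ^ 2) * (x ^ 2 - x * y + y ^ 2) := by
  set p := c ^ 2 + c * d + d ^ 2
  set n := a ^ 2 + a * b + b ^ 2
  have hprod : p ∣ (a * d - b * c) * (a * d + b * c + b * d) := by
    have hid : (a * d - b * c) * (a * d + b * c + b * d) = d ^ 2 * n - b ^ 2 * p := by ring
    rw [hid]
    exact dvd_sub (hdvd.mul_left _) (dvd_mul_left p _)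
  rcases hp.dvd_or_dvd hprod with h | h
  · refine hp.exists_sq_sub_mul_add_sq_of_dvd (X := a * c + a * d + b * d) ?_ h
    ring
  · refine hp.exists_sq_sub_mul_add_sq_of_dvd (X := a * c - b * d) ?_ (dvd_neg.mpr h)
    ring

end Descent

theorem stmt_18_general (a b c d p : ℕ)
    (hp : p = c ^ 2 + c * d + d ^ 2) (hpp : p.Prime)
    (hdvd : p ∣ a ^ 2 + a * b + b ^ 2) :
    ∃ A B : ℕ, a ^ 2 + a * b + b ^ 2 = p * (A ^ 2 + A * B + B ^ 2) := by
  subst hp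
  have hP : Prime ((c : ℤ) ^ 2 + c * d + d ^ 2) := by exact_mod_cast Nat.prime_iff_prime_int.mp hpp
  have hdvdℤ : (c : ℤ) ^ 2 + c * d + d ^ 2 ∣ (a : ℤ) ^ 2 + a * b + b ^ 2 := by exact_mod_cast hdvd
  obtain ⟨x, y, hxy⟩ := hP.exists_sq_sub_mul_add_sq_of_dvd_sq_add_mul_add_sq hdvdℤ
  obtain ⟨A, B, hAB⟩ := Int.exists_nat_sq_sub_mul_add_sq_eq x y
  exact ⟨A, B, by rw [hAB] at hxy; exact_mod_cast hxy⟩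

/-- Lemma 2: if `a, b, c, d` are positive naturals with `gcd(a,b) = 1`,
`p = c² + cd + d²` is prime, and `p` divides `a² + ab + b²`, then the
quotient `(a² + ab + b²)/p` is again of the form `A² + AB + B²` with
`A, B` nonnegative integers. -/
theorem stmt_18 (a b c d p : ℕ) (ha : 0 < a) (hb : 0 < b) (hc : 0 < c) (hd : 0 < d)
    (hgcd : Nat.gcd a b = 1) (hp : p = c ^ 2 + c * d + d ^ 2) (hpp : p.Prime)
    (hdvd : p ∣ a ^ 2 + a * b + b ^ 2) :
    ∃ A B : ℕ, a ^ 2 + a * b + b ^ 2 = p * (A ^ 2 + A * B + B ^ 2) :=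
  stmt_18_general a b c d p hp hpp hdvd
end

section
/- Let a and b be natural numbers with gcd(a, b) = 1. Then every positive divisor m of a^2 + ab + b^2 can be written as m = c^2 + cd + d^2 for some nonnegative integers c and d. -/
/-!
Numbers of the form `x² + xy + y²` (Löschian numbers) are the norms of Eisenstein integers, so
they are closed under multiplication, and if a prime `p = c² + cd + d²` divides `x² + xy + y²`
then the quotient is of this form too. A prime `p` dividing `a² + ab + b²` with `a, b` coprime
has a root `k` of `k² + k + 1` modulo `p`; taking `|k| ≤ p / 2` gives `k² + k + 1 = p r` with
`0 < r < p`, and by induction on `p` every prime factor of `r` is of the form, hence so is `p`.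
A divisor of `a² + ab + b²` is a product of such primes.
-/

def IsLoeschian (n : ℤ) : Prop :=
  ∃ x y : ℤ, n = x ^ 2 + x * y + y ^ 2

namespace IsLoeschian

theorem mul {m n : ℤ} (hm : IsLoeschian m) (hn : IsLoeschian n) : IsLoeschian (m * n) := by
  obtain ⟨a, b, rfl⟩ := hm
  obtain ⟨c, d, rfl⟩ := hn
  exact ⟨a * c - b * d, a * d + b * c + b * d, by ring⟩

/-- `x² + xy + y²` is also represented by `(y, z)` and `(z, x)` where `z = -x - y`, and two of
`x, y, z` have the same sign. -/
theorem exists_nat {n : ℕ} (h : IsLoeschian n) : ∃ c d : ℕ, n = c ^ 2 + c * d + d ^ 2 := by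
  obtain ⟨x, y, hxy⟩ := h
  have of_mul_nonneg : ∀ u v : ℤ, 0 ≤ u * v → (n : ℤ) = u ^ 2 + u * v + v ^ 2 →
      ∃ c d : ℕ, n = c ^ 2 + c * d + d ^ 2 := by
    intro u v huv hn
    refine ⟨u.natAbs, v.natAbs, ?_⟩
    zify
    rw [sq_abs, sq_abs, ← abs_mul, abs_of_nonneg huv, hn]
  rcases le_or_gt 0 (x * y) with h₁ | h₁
  · exact of_mul_nonneg x y h₁ hxy
  rcases le_or_gt 0 (y * (-x - y)) with h₂ | h₂
  · exact of_mul_nonneg y (-x - y) h₂ (by rw [hxy]; ring)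
  rcases le_or_gt 0 ((-x - y) * x) with h₃ | h₃
  · exact of_mul_nonneg (-x - y) x h₃ (by rw [hxy]; ring)
  nlinarith [mul_self_nonneg (x * y * (x + y))]

/-- `(a² + ab + b²)(c² + cd + d²) = X² + XY + Y²` with `X = ac + ad + bd`, `Y = bc - ad`; here
`p ∣ Y`, and then `p² ∣ X² + XY + Y²` forces `p ∣ X`. -/
theorem of_prime_mul_of_dvd_sub {p t a b c d : ℤ} (hp : Prime p)
    (hpcd : p = c ^ 2 + c * d + d ^ 2) (hpt : p * t = a ^ 2 + a * b + b ^ 2)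
    (hdvd : p ∣ a * d - b * c) : IsLoeschian t := by
  set X := a * c + a * d + b * d
  set Y := b * c - a * d
  have hXY : p * (p * t) = X ^ 2 + X * Y + Y ^ 2 := by rw [hpt, hpcd]; ring
  have hY : p ∣ Y := hdvd.neg_right.trans (dvd_of_eq (by ring))
  have hX : p ∣ X := by
    refine hp.dvd_of_dvd_pow (n := 2) ?_
    have : X ^ 2 = p * (p * t) - Y * (X + Y) := by rw [hXY]; ring
    rw [this]
    exact dvd_sub (dvd_mul_right _ _) (hY.mul_right _)
  obtain ⟨x, hx⟩ := hX
  obtain ⟨y, hy⟩ := hY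
  refine ⟨x, y, mul_left_cancel₀ hp.ne_zero (mul_left_cancel₀ hp.ne_zero ?_)⟩
  rw [hXY, hx, hy]
  ring

/-- `p` divides `d² (a² + ab + b²) - b² (c² + cd + d²) = (ad - bc)(ad + bc + bd)`, and the
second factor is the first one for the representation `(a + b, -b)`. -/
theorem of_prime_mul {p t : ℤ} (hp : Prime p) (hpL : IsLoeschian p)
    (h : IsLoeschian (p * t)) : IsLoeschian t := by
  obtain ⟨c, d, hpcd⟩ := hpL
  obtain ⟨a, b, hpt⟩ := h
  have hdvd : p ∣ (a * d - b * c) * (a * d + b * c + b * d) := by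
    have : (a * d - b * c) * (a * d + b * c + b * d) =
        d ^ 2 * (p * t) - b ^ 2 * p := by rw [hpt, hpcd]; ring
    rw [this]
    exact dvd_sub (dvd_mul_of_dvd_right (dvd_mul_right _ _) _) (dvd_mul_left _ _)
  rcases hp.dvd_or_dvd hdvd with h₁ | h₂
  · exact of_prime_mul_of_dvd_sub hp hpcd hpt h₁
  · exact of_prime_mul_of_dvd_sub (a := a + b) (b := -b) hp hpcd
      (by linear_combination hpt) (h₂.trans (dvd_of_eq (by ring)))

theorem of_mul {s : ℕ} {t : ℤ} (hs : 0 < s)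
    (hprime : ∀ q : ℕ, q.Prime → q ∣ s → IsLoeschian q)
    (h : IsLoeschian (s * t)) : IsLoeschian t := by
  induction s using Nat.recOnMul generalizing t with
  | zero => exact absurd hs (lt_irrefl 0)
  | one => simpa only [Nat.cast_one, one_mul] using h
  | prime p hp => exact of_prime_mul (Nat.prime_iff_prime_int.mp hp) (hprime p hp dvd_rfl) h
  | mul m n ihm ihn =>
    have hm : 0 < m := Nat.pos_of_mul_pos_right hs
    have hn : 0 < n := Nat.pos_of_mul_pos_left hs
    refine ihn hn (fun q hq hqn => hprime q hq (dvd_mul_of_dvd_right hqn m)) ?_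
    refine ihm hm (fun q hq hqm => hprime q hq (dvd_mul_of_dvd_left hqm n)) ?_
    simpa only [Nat.cast_mul, mul_assoc] using h

end IsLoeschian

theorem Nat.Prime.isLoeschian_of_sq_add_add_one_eq_zero {p : ℕ} (hp : p.Prime) {k : ZMod p}
    (hk : k ^ 2 + k + 1 = 0) : IsLoeschian p := by
  induction p using Nat.strong_induction_on with
  | _ p ih =>
    have : NeZero p := ⟨hp.ne_zero⟩
    set j := k.valMinAbs
    have hj := k.valMinAbs_mem_Ioc
    obtain ⟨r, hr⟩ : (p : ℤ) ∣ j ^ 2 + j + 1 := by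
      rw [← ZMod.intCast_zmod_eq_zero_iff_dvd]
      push_cast
      rw [ZMod.coe_valMinAbs, hk]
    have hp2 : (2 : ℤ) ≤ p := mod_cast hp.two_le
    have hr0 : 0 < r := by nlinarith [sq_nonneg (2 * j + 1)]
    -- `4 p r = (2j + 1)² + 3 ≤ (p + 1)² + 3 < 4 p²`
    have hrp : r < p := by nlinarith [hj.1, hj.2]
    lift r to ℕ using hr0.le
    refine IsLoeschian.of_mul (s := r) (mod_cast hr0) (fun q hq hqr => ?_)
      ⟨j, 1, by rw [mul_comm, ← hr]; ring⟩
    have hqp : q < p := (Nat.le_of_dvd (mod_cast hr0) hqr).trans_lt (mod_cast hrp)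
    have hqj : (q : ℤ) ∣ j ^ 2 + j + 1 :=
      hr ▸ dvd_mul_of_dvd_right (Int.natCast_dvd_natCast.mpr hqr) _
    refine ih q hqp hq (k := (j : ZMod q)) ?_
    exact_mod_cast (ZMod.intCast_zmod_eq_zero_iff_dvd _ q).mpr hqj

theorem exists_sq_add_add_one_eq_zero_of_dvd {p : ℕ} (hp : p.Prime) {a b : ℤ}
    (hab : IsCoprime a b) (hdvd : (p : ℤ) ∣ a ^ 2 + a * b + b ^ 2) :
    ∃ k : ZMod p, k ^ 2 + k + 1 = 0 := by
  have := Fact.mk hp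
  have hpb : ¬ (p : ℤ) ∣ b := by
    intro hb
    have ha : (p : ℤ) ∣ a := by
      refine (Nat.prime_iff_prime_int.mp hp).dvd_of_dvd_pow (n := 2) ?_
      have : a ^ 2 = a ^ 2 + a * b + b ^ 2 - b * (a + b) := by ring
      rw [this]
      exact dvd_sub hdvd (hb.mul_right _)
    exact (Nat.prime_iff_prime_int.mp hp).not_isUnit (hab.isUnit_of_dvd' ha hb)
  have hb0 : (b : ZMod p) ≠ 0 := by rwa [Ne, ZMod.intCast_zmod_eq_zero_iff_dvd]
  have hF : (a : ZMod p) ^ 2 + a * b + b ^ 2 = 0 := by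
    exact_mod_cast (ZMod.intCast_zmod_eq_zero_iff_dvd _ p).mpr hdvd
  refine ⟨a / b, ?_⟩
  field_simp
  linear_combination hF

theorem isLoeschian_of_dvd {a b : ℤ} (hab : IsCoprime a b) {m : ℕ} (hm : 0 < m)
    (hdvd : (m : ℤ) ∣ a ^ 2 + a * b + b ^ 2) : IsLoeschian m := by
  induction m using Nat.recOnMul with
  | zero => exact absurd hm (lt_irrefl 0)
  | one => exact ⟨1, 0, by ring⟩
  | prime p hp =>
    obtain ⟨k, hk⟩ := exists_sq_add_add_one_eq_zero_of_dvd hp hab hdvd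
    exact hp.isLoeschian_of_sq_add_add_one_eq_zero hk
  | mul m n ihm ihn =>
    push_cast at hdvd ⊢
    exact (ihm (Nat.pos_of_mul_pos_right hm) (dvd_of_mul_right_dvd hdvd)).mul
      (ihn (Nat.pos_of_mul_pos_left hm) (dvd_of_mul_left_dvd hdvd))

theorem stmt_19_general (a b : ℕ) (hgcd : Nat.gcd a b = 1) :
    ∀ m : ℕ, 0 < m → m ∣ a ^ 2 + a * b + b ^ 2 →
      ∃ c d : ℕ, m = c ^ 2 + c * d + d ^ 2 := by
  intro m hm hdvd
  refine (isLoeschian_of_dvd (Nat.isCoprime_iff_coprime.mpr hgcd) hm ?_).exists_nat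
  exact_mod_cast Int.natCast_dvd_natCast.mpr hdvd

/-- Theorem 5: if `a, b` are positive naturals with `gcd(a,b) = 1`, then every
positive divisor `m` of `a² + ab + b²` can be written as `m = c² + cd + d²`
for some nonnegative integers `c, d`. -/
theorem stmt_19 (a b : ℕ) (ha : 0 < a) (hb : 0 < b) (hgcd : Nat.gcd a b = 1) :
    ∀ m : ℕ, 0 < m → m ∣ a ^ 2 + a * b + b ^ 2 →
      ∃ c d : ℕ, m = c ^ 2 + c * d + d ^ 2 :=
  stmt_19_general a b hgcd
end
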